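/- All eigenvalues of the adjacency matrix A(X_N) are real, and the HOMO-LUMO gap λ_H − λ_L, where λ_H is the smallest nonnegative eigenvalue and λ_L is the largest nonpositive eigenvalue of A(X_N), equals 2·min over all characters χ of A of |χ(v₁) + χ(v₂) + χ(v₁)χ(v₂)|. -/

import Mathlib

/-!
Write a function on `G = A ⋊ ℤ/2` as a pair `(f₀, f₁)` of functions on `A` (its values at the
rotations `(x, 1)` and at the reflections `(x, s)`). Since `(x, 1)(u, s) = (x + u, s)` and
`(x, s)(u, s) = (x - u, 1)`, the adjacency operator sends `(f₀, f₁)` to `(T f₁, T* f₀)`, where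
`T f (x) = ∑_{u ∈ S} f (x + u)` and `S = {v₁, v₁ + v₂, v₂}`. A character `ψ` of `A` is an
eigenvector of `T` with eigenvalue `W ψ = ∑_{u ∈ S} ψ u = ψ v₁ + ψ v₂ + ψ v₁ ψ v₂`, so on the
`ψ`-component the operator acts as the matrix `[[0, W ψ], [conj (W ψ), 0]]`, whose eigenvalues
are `±‖W ψ‖`. As characters span all functions on `A`, the spectrum is exactly
`{±‖W ψ‖ | ψ}`: it is real and symmetric about `0`, so `λ_H = -λ_L = min_ψ ‖W ψ‖`.
-/

/-- The action of `ℤ/2ℤ` on a commutative group `M` in which the nontrivial element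
acts by inversion (negation, in additive language). -/
def negAct (M : Type*) [CommGroup M] : Multiplicative (ZMod 2) →* MulAut M where
  toFun g := if Multiplicative.toAdd g = 0 then 1 else MulEquiv.inv M
  map_one' := by simp
  map_mul' g h := by
    have hinv : MulEquiv.inv M * MulEquiv.inv M = 1 := by
      ext x; simp
    by_cases hg : Multiplicative.toAdd g = 0 <;> by_cases hh : Multiplicative.toAdd h = 0
    · simp [hg, hh]
    · simp [hg, hh]
    · simp [hg, hh]
    · have h1 : ∀ x : ZMod 2, x ≠ 0 → x = 1 := by decide
      have h2 : (1 : ZMod 2) + 1 = 0 := by decide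
      have : Multiplicative.toAdd (g * h) = 0 := by
        simp [h1 _ hg, h1 _ hh, h2]
      simp [this, hg, hh, hinv]

/-- The underlying equivalence between a semidirect product and the product type. -/
def sdpEquivProd {N G : Type*} [Group N] [Group G] (φ : G →* MulAut N) :
    (N ⋊[φ] G) ≃ N × G where
  toFun x := (x.left, x.right)
  invFun p := ⟨p.1, p.2⟩
  left_inv _ := rfl
  right_inv _ := rfl

/-- A semidirect product of finite groups is finite. -/
instance instFintypeSdp {N G : Type*} [Group N] [Group G] [Fintype N] [Fintype G]
    {φ : G →* MulAut N} : Fintype (N ⋊[φ] G) :=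
  Fintype.ofEquiv (N × G) (sdpEquivProd φ).symm


open Finset Matrix ComplexConjugate

namespace AddChar

section Fourier

variable {A : Type*} [AddCommGroup A] [Fintype A]

open scoped ComplexOrder in
theorem eq_zero_of_forall_star_dotProduct_eq_zero {f : A → ℂ}
    (hf : ∀ ψ : AddChar A ℂ, star ⇑ψ ⬝ᵥ f = 0) : f = 0 := by
  have hrepr := (complexBasis A).sum_repr f
  simp only [coe_complexBasis] at hrepr
  refine dotProduct_star_self_eq_zero.1 ?_
  calc star f ⬝ᵥ f = star (∑ ψ, (complexBasis A).repr f ψ • ⇑ψ) ⬝ᵥ f := by rw [hrepr]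
    _ = ∑ ψ, star ((complexBasis A).repr f ψ) • (star ⇑ψ ⬝ᵥ f) := by
        simp only [star_sum, star_smul, sum_dotProduct, smul_dotProduct]
    _ = 0 := by simp [hf]

theorem star_dotProduct_comp_add_right (ψ : AddChar A ℂ) (f : A → ℂ) (u : A) :
    star ⇑ψ ⬝ᵥ (fun x ↦ f (x + u)) = ψ u * (star ⇑ψ ⬝ᵥ f) := by
  simp only [dotProduct, Pi.star_apply, mul_sum]
  rw [← (Equiv.subRight u).sum_comp]
  refine sum_congr rfl fun x _ ↦ ?_
  simp only [Equiv.subRight_apply, sub_eq_add_neg, neg_add_cancel_right, map_add_eq_mul,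
    map_neg_eq_conj, star_mul', RCLike.star_def, Complex.conj_conj]
  ring

theorem star_dotProduct_comp_sub_right (ψ : AddChar A ℂ) (f : A → ℂ) (u : A) :
    star ⇑ψ ⬝ᵥ (fun x ↦ f (x - u)) = conj (ψ u) * (star ⇑ψ ⬝ᵥ f) := by
  simpa only [sub_eq_add_neg, map_neg_eq_conj] using star_dotProduct_comp_add_right ψ f (-u)

end Fourier

theorem exists_coe_eq_iff {A K : Type*} [AddLeftCancelMonoid A] [Finite A]
    [NormedDivisionRing K] (χ : A → K) :
    (∃ ψ : AddChar A K, ⇑ψ = χ) ↔ (∀ x y, χ (x + y) = χ x * χ y) ∧ ∀ x, ‖χ x‖ = 1 := by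
  refine ⟨?_, fun ⟨hadd, hnorm⟩ ↦ ?_⟩
  · rintro ⟨ψ, rfl⟩
    exact ⟨ψ.map_add_eq_mul, ψ.norm_apply⟩
  have hχ0 : χ 0 ≠ 0 := norm_ne_zero_iff.1 (by simp [hnorm])
  refine ⟨⟨χ, ?_, hadd⟩, rfl⟩
  simpa [hχ0] using hadd 0 0

theorem setOf_exists_eq_eq_range {A K β : Type*} [AddLeftCancelMonoid A] [Finite A]
    [NormedDivisionRing K] (F : (A → K) → β) :
    {t | ∃ χ : A → K, (∀ x y, χ (x + y) = χ x * χ y) ∧ (∀ x, ‖χ x‖ = 1) ∧ t = F χ} =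
      Set.range fun ψ : AddChar A K ↦ F ψ := by
  ext t
  refine ⟨fun ⟨χ, hadd, hnorm, ht⟩ ↦ ?_,
    fun ⟨ψ, hψ⟩ ↦ ⟨ψ, ψ.map_add_eq_mul, ψ.norm_apply, hψ.symm⟩⟩
  obtain ⟨ψ, rfl⟩ := (exists_coe_eq_iff χ).2 ⟨hadd, hnorm⟩
  exact ⟨ψ, ht.symm⟩

theorem sum_apply_triple {A M : Type*} [AddCancelCommMonoid A] [DecidableEq A] [CommSemiring M]
    (ψ : AddChar A M) {v₁ v₂ : A} (h₁ : v₁ ≠ 0) (h₂ : v₂ ≠ 0) (h₁₂ : v₁ ≠ v₂) :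
    ∑ u ∈ {v₁, v₁ + v₂, v₂}, ψ u = ψ v₁ + ψ v₂ + ψ v₁ * ψ v₂ := by
  have hv₁ : v₁ ∉ ({v₁ + v₂, v₂} : Finset A) := by
    simp only [mem_insert, mem_singleton, not_or]
    exact ⟨fun h ↦ h₂ (left_eq_add.1 h), h₁₂⟩
  rw [sum_insert hv₁, sum_pair fun h ↦ h₁ (add_eq_right.1 h), map_add_eq_mul]
  ring

end AddChar

theorem Complex.mul_self_eq_mul_conj_iff {z w : ℂ} :
    z * z = w * conj w ↔ z = ‖w‖ ∨ z = -‖w‖ := by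
  rw [Complex.mul_conj', sq, mul_self_eq_mul_self_iff]

theorem Complex.exists_ne_zero_of_mul_self_eq_mul_conj {z w : ℂ} (h : z * z = w * conj w) :
    ∃ p q : ℂ, (p ≠ 0 ∨ q ≠ 0) ∧ w * q = z * p ∧ conj w * p = z * q := by
  by_cases hw : w = 0
  · obtain rfl : z = 0 := by simpa [hw] using h
    exact ⟨1, 0, by simp [hw]⟩
  · exact ⟨w, z, Or.inl hw, mul_comm w z, by rw [h, mul_comm]⟩

section SymmetricSet

variable {E R : Set ℝ} {m : ℝ}

theorem isLeast_nonneg_of_mem_iff_abs_mem (hE : ∀ x, x ∈ E ↔ |x| ∈ R) (hm : IsLeast R m)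
    (hm0 : 0 ≤ m) : IsLeast {x | x ∈ E ∧ 0 ≤ x} m := by
  refine ⟨⟨(hE m).2 (by rw [abs_of_nonneg hm0]; exact hm.1), hm0⟩, fun x ⟨hx, hx0⟩ ↦ ?_⟩
  simpa [abs_of_nonneg hx0] using hm.2 ((hE x).1 hx)

theorem isGreatest_nonpos_of_mem_iff_abs_mem (hE : ∀ x, x ∈ E ↔ |x| ∈ R) (hm : IsLeast R m)
    (hm0 : 0 ≤ m) : IsGreatest {x | x ∈ E ∧ x ≤ 0} (-m) := by
  refine ⟨⟨(hE _).2 (by rw [abs_neg, abs_of_nonneg hm0]; exact hm.1), by linarith⟩,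
    fun x ⟨hx, hx0⟩ ↦ ?_⟩
  have := hm.2 ((hE x).1 hx)
  rw [abs_of_nonpos hx0] at this
  linarith

end SymmetricSet

section Cayley

variable {G : Type*} [Group G] [DecidableEq G]

def cayleyMatrix (R : Type*) [Zero R] [One R] (T : Finset G) : Matrix G G R :=
  Matrix.of fun g h ↦ if g⁻¹ * h ∈ T then 1 else 0

theorem cayleyMatrix_mulVec {R : Type*} [Fintype G] [NonAssocSemiring R] (T : Finset G)
    (f : G → R) (g : G) :
    (cayleyMatrix R T *ᵥ f) g = ∑ t ∈ T, f (g * t) := by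
  simp only [cayleyMatrix, Matrix.mulVec, dotProduct, Matrix.of_apply, ite_mul, one_mul,
    zero_mul]
  rw [← Equiv.sum_comp (Equiv.mulLeft g)]
  simp only [Equiv.coe_mulLeft, inv_mul_cancel_left, sum_ite_mem, univ_inter]

end Cayley

abbrev GenDihedral (A : Type*) [AddCommGroup A] :=
  Multiplicative A ⋊[negAct (Multiplicative A)] Multiplicative (ZMod 2)

namespace GenDihedral

variable {A : Type*} [AddCommGroup A]

def r (x : A) : GenDihedral A := ⟨Multiplicative.ofAdd x, 1⟩

def sr (x : A) : GenDihedral A := ⟨Multiplicative.ofAdd x, Multiplicative.ofAdd 1⟩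

@[simp] theorem r_mul_sr (x u : A) : r x * sr u = sr (x + u) := by
  ext <;> rfl

@[simp] theorem sr_mul_sr (x u : A) : sr x * sr u = r (x - u) := by
  ext
  · exact congrArg Multiplicative.ofAdd (sub_eq_add_neg x u).symm
  · change Multiplicative.ofAdd (1 + 1 : ZMod 2) = Multiplicative.ofAdd 0
    decide

theorem sr_injective : Function.Injective (sr : A → GenDihedral A) :=
  fun _ _ h ↦ congrArg (fun g : GenDihedral A ↦ Multiplicative.toAdd g.left) h

theorem forall_iff {P : GenDihedral A → Prop} :
    (∀ g, P g) ↔ (∀ x, P (r x)) ∧ ∀ x, P (sr x) := by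
  refine ⟨fun h ↦ ⟨fun x ↦ h _, fun x ↦ h _⟩, fun ⟨hr, hsr⟩ ⟨x, t⟩ ↦ ?_⟩
  obtain rfl | rfl : t = 1 ∨ t = Multiplicative.ofAdd 1 := by revert t; decide
  exacts [hr (Multiplicative.toAdd x), hsr (Multiplicative.toAdd x)]

section Spectrum

variable [Fintype A] [DecidableEq (GenDihedral A)] (S : Finset A)

theorem cayleyMatrix_image_sr_mulVec_eq_smul_iff {R : Type*} [NonAssocSemiring R]
    (f : GenDihedral A → R) (μ : R) :
    cayleyMatrix R (S.image sr) *ᵥ f = μ • f ↔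
      (∀ x, ∑ u ∈ S, f (sr (x + u)) = μ * f (r x)) ∧
        ∀ x, ∑ u ∈ S, f (r (x - u)) = μ * f (sr x) := by
  simp only [funext_iff (f := _ *ᵥ f), forall_iff, cayleyMatrix_mulVec,
    sum_image fun _ _ _ _ h ↦ sr_injective h, r_mul_sr, sr_mul_sr, Pi.smul_apply, smul_eq_mul]

theorem exists_addChar_mul_self_eq_of_mulVec_eq_smul {f : GenDihedral A → ℂ} {μ : ℂ}
    (hf0 : f ≠ 0) (hf : cayleyMatrix ℂ (S.image sr) *ᵥ f = μ • f) :
    ∃ ψ : AddChar A ℂ, μ * μ = (∑ u ∈ S, ψ u) * conj (∑ u ∈ S, ψ u) := by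
  obtain ⟨hr, hsr⟩ := (cayleyMatrix_image_sr_mulVec_eq_smul_iff S f μ).1 hf
  set p : AddChar A ℂ → ℂ := fun ψ ↦ star ⇑ψ ⬝ᵥ (f ∘ r)
  set q : AddChar A ℂ → ℂ := fun ψ ↦ star ⇑ψ ⬝ᵥ (f ∘ sr)
  have hp (ψ : AddChar A ℂ) : (∑ u ∈ S, ψ u) * q ψ = μ * p ψ := calc
    _ = ∑ u ∈ S, star ⇑ψ ⬝ᵥ fun x ↦ f (sr (x + u)) := by
      rw [sum_mul]
      exact sum_congr rfl fun u _ ↦ (ψ.star_dotProduct_comp_add_right (f ∘ sr) u).symm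
    _ = star ⇑ψ ⬝ᵥ (μ • (f ∘ r)) := by
      rw [← dotProduct_sum, sum_fn]; exact congrArg _ (funext hr)
    _ = μ * p ψ := dotProduct_smul ..
  have hq (ψ : AddChar A ℂ) : conj (∑ u ∈ S, ψ u) * p ψ = μ * q ψ := calc
    _ = ∑ u ∈ S, star ⇑ψ ⬝ᵥ fun x ↦ f (r (x - u)) := by
      rw [map_sum, sum_mul]
      exact sum_congr rfl fun u _ ↦ (ψ.star_dotProduct_comp_sub_right (f ∘ r) u).symm
    _ = star ⇑ψ ⬝ᵥ (μ • (f ∘ sr)) := by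
      rw [← dotProduct_sum, sum_fn]; exact congrArg _ (funext hsr)
    _ = μ * q ψ := dotProduct_smul ..
  by_contra! hμ
  refine hf0 (funext (forall_iff.2 ⟨fun x ↦ ?_, fun x ↦ ?_⟩))
  · refine congrFun (AddChar.eq_zero_of_forall_star_dotProduct_eq_zero (f := f ∘ r) fun ψ ↦ ?_) x
    refine (mul_eq_zero.1 (?_ : (μ * μ - _) * p ψ = 0)).resolve_left (sub_ne_zero.2 (hμ ψ))
    linear_combination -μ * hp ψ - (∑ u ∈ S, ψ u) * hq ψ
  · refine congrFun (AddChar.eq_zero_of_forall_star_dotProduct_eq_zero (f := f ∘ sr) fun ψ ↦ ?_) x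
    refine (mul_eq_zero.1 (?_ : (μ * μ - _) * q ψ = 0)).resolve_left (sub_ne_zero.2 (hμ ψ))
    linear_combination -μ * hq ψ - conj (∑ u ∈ S, ψ u) * hp ψ

theorem exists_mulVec_eq_smul_of_mul_self_eq (ψ : AddChar A ℂ) {μ : ℂ}
    (hμ : μ * μ = (∑ u ∈ S, ψ u) * conj (∑ u ∈ S, ψ u)) :
    ∃ f : GenDihedral A → ℂ, f ≠ 0 ∧ cayleyMatrix ℂ (S.image sr) *ᵥ f = μ • f := by
  obtain ⟨p, q, hpq, hp, hq⟩ := Complex.exists_ne_zero_of_mul_self_eq_mul_conj hμ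
  let f : GenDihedral A → ℂ := fun g ↦
    (if g.right = 1 then p else q) * ψ (Multiplicative.toAdd g.left)
  have hfr (x : A) : f (r x) = p * ψ x := by simp [f, r]
  have hfsr (x : A) : f (sr x) = q * ψ x := by simp [f, sr]
  refine ⟨f, fun hf ↦ ?_,
    (cayleyMatrix_image_sr_mulVec_eq_smul_iff S f μ).2 ⟨fun x ↦ ?_, fun x ↦ ?_⟩⟩
  · rcases hpq with hp0 | hq0
    · exact hp0 (by simpa [hfr] using congrFun hf (r 0))
    · exact hq0 (by simpa [hfsr] using congrFun hf (sr 0))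
  · simp only [hfsr, hfr, AddChar.map_add_eq_mul, ← mul_sum]
    linear_combination ψ x * hp
  · simp only [hfsr, hfr, sub_eq_add_neg, AddChar.map_add_eq_mul, AddChar.map_neg_eq_conj,
      ← mul_sum, ← map_sum]
    linear_combination ψ x * hq

theorem exists_mulVec_eq_smul_iff (μ : ℂ) :
    (∃ f : GenDihedral A → ℂ, f ≠ 0 ∧ cayleyMatrix ℂ (S.image sr) *ᵥ f = μ • f) ↔
      ∃ ψ : AddChar A ℂ, μ = ‖∑ u ∈ S, ψ u‖ ∨ μ = -‖∑ u ∈ S, ψ u‖ := by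
  simp only [← Complex.mul_self_eq_mul_conj_iff]
  exact ⟨fun ⟨f, hf0, hf⟩ ↦ exists_addChar_mul_self_eq_of_mulVec_eq_smul S hf0 hf,
    fun ⟨ψ, hψ⟩ ↦ exists_mulVec_eq_smul_of_mul_self_eq S ψ hψ⟩

end Spectrum

end GenDihedral

open scoped Classical in
/-- All eigenvalues of the adjacency matrix `A(X_N)` are real, and the
HOMO-LUMO gap `λ_H − λ_L`, where `λ_H` is the smallest nonnegative eigenvalue and
`λ_L` is the largest nonpositive eigenvalue of `A(X_N)`, equals
`2 · min over all characters χ of A of |χ(v₁) + χ(v₂) + χ(v₁)χ(v₂)|`. -/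
theorem stmt_12 (N : AddSubgroup (ℤ × ℤ)) [Fintype ((ℤ × ℤ) ⧸ N)]
    (h1 : (QuotientAddGroup.mk ((1, 0) : ℤ × ℤ) : (ℤ × ℤ) ⧸ N) ≠ 0)
    (h2 : (QuotientAddGroup.mk ((0, 1) : ℤ × ℤ) : (ℤ × ℤ) ⧸ N) ≠ 0)
    (h12 : (QuotientAddGroup.mk ((1, 0) : ℤ × ℤ) : (ℤ × ℤ) ⧸ N) ≠
      QuotientAddGroup.mk ((0, 1) : ℤ × ℤ)) :
    let A := (ℤ × ℤ) ⧸ N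
    let v₁ : A := QuotientAddGroup.mk (1, 0)
    let v₂ : A := QuotientAddGroup.mk (0, 1)
    let G := Multiplicative A ⋊[negAct (Multiplicative A)] Multiplicative (ZMod 2)
    let s : Multiplicative (ZMod 2) := Multiplicative.ofAdd 1
    let a : G := ⟨Multiplicative.ofAdd v₁, s⟩
    let b : G := ⟨Multiplicative.ofAdd (v₁ + v₂), s⟩
    let c : G := ⟨Multiplicative.ofAdd v₂, s⟩
    let Adj : Matrix G G ℂ :=
      fun g h => if g⁻¹ * h = a ∨ g⁻¹ * h = b ∨ g⁻¹ * h = c then 1 else 0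
    let IsEig : ℂ → Prop := fun lam => ∃ v : G → ℂ, v ≠ 0 ∧ Adj.mulVec v = lam • v
    (∀ lam : ℂ, IsEig lam → lam.im = 0) ∧
    ∃ lamH lamL m : ℝ,
      IsLeast {x : ℝ | IsEig (x : ℂ) ∧ 0 ≤ x} lamH ∧
      IsGreatest {x : ℝ | IsEig (x : ℂ) ∧ x ≤ 0} lamL ∧
      IsLeast {t : ℝ | ∃ χ : A → ℂ,
        (∀ x y, χ (x + y) = χ x * χ y) ∧ (∀ x, ‖χ x‖ = 1) ∧
        t = ‖χ v₁ + χ v₂ + χ v₁ * χ v₂‖} m ∧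
      lamH - lamL = 2 * m := by
  intro A v₁ v₂ G s a b c Adj IsEig
  set W : AddChar A ℂ → ℂ := fun ψ ↦ ψ v₁ + ψ v₂ + ψ v₁ * ψ v₂
  have hAdj : Adj = cayleyMatrix ℂ (({v₁, v₁ + v₂, v₂} : Finset A).image GenDihedral.sr) := by
    ext g h
    simp [Adj, cayleyMatrix, GenDihedral.sr, a, b, c, s]
  have hEig (μ : ℂ) : IsEig μ ↔ ∃ ψ : AddChar A ℂ, μ = ‖W ψ‖ ∨ μ = -‖W ψ‖ := by
    have := GenDihedral.exists_mulVec_eq_smul_iff ({v₁, v₁ + v₂, v₂} : Finset A) μ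
    have hW (ψ : AddChar A ℂ) : ∑ u ∈ {v₁, v₁ + v₂, v₂}, ψ u = W ψ :=
      ψ.sum_apply_triple h1 h2 h12
    simp only [hW] at this
    rw [← this, ← hAdj]
  set R := {t : ℝ | ∃ χ : A → ℂ, (∀ x y, χ (x + y) = χ x * χ y) ∧ (∀ x, ‖χ x‖ = 1) ∧
    t = ‖χ v₁ + χ v₂ + χ v₁ * χ v₂‖}
  have hR : R = Set.range fun ψ ↦ ‖W ψ‖ := AddChar.setOf_exists_eq_eq_range _
  have hEigReal (x : ℝ) : IsEig x ↔ |x| ∈ R := by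
    rw [hEig, hR]
    simp only [Set.mem_range, abs_eq (norm_nonneg _), eq_comm (b := |x|)]
    norm_cast
  obtain ⟨ψ₀, hψ₀⟩ := Finite.exists_min fun ψ ↦ ‖W ψ‖
  have hm : IsLeast R ‖W ψ₀‖ := hR ▸ ⟨⟨ψ₀, rfl⟩, by rintro _ ⟨ψ, rfl⟩; exact hψ₀ ψ⟩
  refine ⟨fun μ hμ ↦ ?_, _, _, _, isLeast_nonneg_of_mem_iff_abs_mem hEigReal hm (norm_nonneg _),
    isGreatest_nonpos_of_mem_iff_abs_mem hEigReal hm (norm_nonneg _), hm, by ring⟩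
  obtain ⟨ψ, rfl | rfl⟩ := (hEig μ).1 hμ <;> simp
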